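/- Let β > −1 and let P be a monic real polynomial of degree |n⃗| satisfying the type II Jacobi–Piñeiro orthogonality conditions: ∫_0^1 x^j P(x) x^{α_i} (1−x)^β dx = 0 for every i ∈ {1,…,p} and every j ∈ {0,…,n_i−1}. Then for every real s > 0: ∫_0^1 P(x) (1−x)^β x^{s−1} dx = [(−1)^{|n⃗|} Γ(|n⃗|+β+1) / ∏_{i=1}^p (α_i+β+|n⃗|+1)_{n_i}] · [Γ(s)/Γ(s+β+|n⃗|+1)] · ∏_{i=1}^p (α_i+1−s)_{n_i}. -/

import Mathlib

open Finset MeasureTheory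

open Set

/-- The Pochhammer symbol (rising factorial) `(a)_m` for a real number `a`. -/
noncomputable def poch (a : ℝ) (m : ℕ) : ℝ := (ascPochhammer ℝ m).eval a

lemma complex_eq_real_on_Ioo (a b : ℝ) : EqOn (fun x : ℝ => (x:ℂ) ^ ((a:ℂ)-1) * ((1:ℂ)-x) ^ ((b:ℂ)-1))
    (fun x : ℝ => ((x ^ (a-1) * (1-x) ^ (b-1) : ℝ) : ℂ)) (Ioo 0 1) := by
  intro x hx
  simp only []
  rw [show ((a:ℂ)-1) = ((a-1 : ℝ) : ℂ) by push_cast; ring,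
      show ((b:ℂ)-1) = ((b-1 : ℝ) : ℂ) by push_cast; ring,
      show ((1:ℂ) - (x:ℂ)) = ((1 - x : ℝ) : ℂ) by push_cast; ring,
      ← Complex.ofReal_cpow hx.1.le, ← Complex.ofReal_cpow (by linarith [hx.2] : (0:ℝ) ≤ 1 - x)]
  push_cast
  ring

lemma real_beta_integrable {a b : ℝ} (ha : 0 < a) (hb : 0 < b) :
    IntegrableOn (fun x : ℝ => x ^ (a-1) * (1-x) ^ (b-1)) (Ioo 0 1) := by
  have h := Complex.betaIntegral_convergent (u := a) (v := b) (by simpa) (by simpa)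
  rw [intervalIntegrable_iff_integrableOn_Ioc_of_le zero_le_one] at h
  have h2 : IntegrableOn (fun x : ℝ => (x:ℂ) ^ ((a:ℂ)-1) * ((1:ℂ)-x) ^ ((b:ℂ)-1)) (Ioo 0 1) :=
    h.mono_set Ioo_subset_Ioc_self
  rw [integrableOn_congr_fun (complex_eq_real_on_Ioo a b) measurableSet_Ioo] at h2
  have h3 := h2.re
  simp at h3
  exact h3

lemma real_beta_eval {a b : ℝ} (ha : 0 < a) (hb : 0 < b) :
    ∫ x in Ioo (0:ℝ) 1, x ^ (a-1) * (1-x) ^ (b-1) =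
      Real.Gamma a * Real.Gamma b / Real.Gamma (a + b) := by
  have key := Complex.Gamma_mul_Gamma_eq_betaIntegral (s := a) (t := b) (by simpa) (by simpa)
  rw [Complex.betaIntegral] at key
  rw [intervalIntegral.integral_of_le zero_le_one, integral_Ioc_eq_integral_Ioo,
    setIntegral_congr_fun measurableSet_Ioo (complex_eq_real_on_Ioo a b)] at key
  have hco : ∀ r : ℝ, Complex.ofReal r = @RCLike.ofReal ℂ _ r := fun r => rfl
  simp only [hco] at key
  rw [_root_.integral_ofReal] at key
  simp only [← hco] at key
  have hG : Real.Gamma (a+b) ≠ 0 := (Real.Gamma_pos_of_pos (by linarith)).ne'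
  have : Complex.Gamma a * Complex.Gamma b = ((Real.Gamma a * Real.Gamma b : ℝ) : ℂ) := by
    rw [Complex.Gamma_ofReal, Complex.Gamma_ofReal]; push_cast; ring
  rw [this, show ((a:ℂ)+(b:ℂ)) = ((a+b : ℝ):ℂ) by push_cast; ring, Complex.Gamma_ofReal] at key
  have key2 : (Real.Gamma a * Real.Gamma b : ℝ) =
      Real.Gamma (a+b) * ∫ x in Ioo (0:ℝ) 1, x ^ (a-1) * (1-x) ^ (b-1) := by
    exact_mod_cast key
  rw [key2]; field_simp

noncomputable def poch' (a : ℝ) (m : ℕ) : ℝ := (ascPochhammer ℝ m).eval a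

lemma poch'_zero (a : ℝ) : poch' a 0 = 1 := by simp [poch']
lemma poch'_succ (a : ℝ) (m : ℕ) : poch' a (m+1) = poch' a m * (a + m) := by
  simpa [poch'] using ascPochhammer_succ_eval m a

lemma poch'_eq_prod (a : ℝ) (m : ℕ) : poch' a m = ∏ j ∈ range m, (a + j) := by
  induction m with
  | zero => simp [poch'_zero]
  | succ m ih => rw [poch'_succ, ih, prod_range_succ]

lemma poch'_pos {a : ℝ} (ha : 0 < a) (m : ℕ) : 0 < poch' a m :=
  ascPochhammer_pos m a ha

lemma Gamma_add_nat {s : ℝ} (hs : 0 < s) (m : ℕ) :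
    Real.Gamma (s + m) = Real.Gamma s * poch' s m := by
  induction m with
  | zero => simp [poch'_zero]
  | succ m ih =>
    have h1 : s + (m+1 : ℕ) = (s + m) + 1 := by push_cast; ring
    rw [h1, Real.Gamma_add_one (by positivity), ih, poch'_succ]
    ring

lemma poch'_neg (b : ℝ) (m : ℕ) : poch' (-b) m = (-1)^m * poch' (b - m + 1) m := by
  rw [poch', ascPochhammer_eval_neg_eq_descPochhammer, descPochhammer_eval_eq_ascPochhammer]
  rfl

lemma weight_integrable {β t : ℝ} (hβ : -1 < β) (ht : 0 < t) :
    IntegrableOn (fun x : ℝ => x ^ (t-1) * (1-x) ^ β) (Ioo 0 1) := by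
  have := real_beta_integrable (a := t) (b := β+1) ht (by linarith)
  simpa using this

lemma moment_eval {β t : ℝ} (hβ : -1 < β) (ht : 0 < t) :
    ∫ x in Ioo (0:ℝ) 1, x ^ (t-1) * (1-x) ^ β =
      Real.Gamma t * Real.Gamma (β+1) / Real.Gamma (t+β+1) := by
  have := real_beta_eval (a := t) (b := β+1) ht (by linarith)
  rw [show t + β + 1 = t + (β+1) by ring]; simpa using this

lemma poly_mellin_expand (β : ℝ) (hβ : -1 < β) (P : Polynomial ℝ) {s : ℝ} (hs : 0 < s) :
    ∫ x in Ioo (0:ℝ) 1, P.eval x * (1-x) ^ β * x ^ (s-1) =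
      ∑ k ∈ range (P.natDegree + 1),
        P.coeff k * (Real.Gamma (s+k) * Real.Gamma (β+1) / Real.Gamma (s+k+β+1)) := by
  set N := P.natDegree with hN
  have hint : ∀ k : ℕ, IntegrableOn (fun x : ℝ => P.coeff k * (x ^ (s+k-1) * (1-x) ^ β))
      (Ioo 0 1) := fun k =>
    (weight_integrable hβ (by positivity : (0:ℝ) < s + k)).const_mul (P.coeff k)
  have hEq : EqOn (fun x : ℝ => P.eval x * (1-x) ^ β * x ^ (s-1))
      (fun x : ℝ => ∑ k ∈ range (N+1), P.coeff k * (x ^ (s+k-1) * (1-x) ^ β)) (Ioo 0 1) := by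
    intro x hx
    simp only
    rw [Polynomial.eval_eq_sum_range, Finset.sum_mul, Finset.sum_mul]
    refine Finset.sum_congr rfl fun k _ => ?_
    rw [show s + (k:ℝ) - 1 = (k:ℝ) + (s-1) by ring, Real.rpow_add hx.1, Real.rpow_natCast]
    ring
  rw [setIntegral_congr_fun measurableSet_Ioo hEq,
    integral_finset_sum _ (fun k _ => hint k)]
  refine Finset.sum_congr rfl fun k _ => ?_
  rw [MeasureTheory.integral_const_mul, moment_eval hβ (by positivity : (0:ℝ) < s + k)]

lemma term_eq {β s : ℝ} (hβ : -1 < β) (hs : 0 < s) {k S : ℕ} (hk : k ≤ S) :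
    Real.Gamma (s+k) * Real.Gamma (β+1) / Real.Gamma (s+k+β+1) =
      Real.Gamma (β+1) * Real.Gamma s / Real.Gamma (s+β+S+1) *
        (poch' s k * poch' (s+β+k+1) (S-k)) := by
  have hk0 : (0:ℝ) ≤ k := Nat.cast_nonneg k
  have hpos : (0:ℝ) < s + β + k + 1 := by linarith
  have h1 : Real.Gamma (s+β+S+1) = Real.Gamma (s+β+k+1) * poch' (s+β+k+1) (S-k) := by
    rw [show s+β+(S:ℝ)+1 = (s+β+(k:ℝ)+1) + ((S-k:ℕ):ℝ) by
      rw [Nat.cast_sub hk]; ring]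
    exact Gamma_add_nat hpos (S-k)
  have h4 : s + (k:ℝ) + β + 1 = s + β + k + 1 := by ring
  rw [Gamma_add_nat hs k, h4, h1]
  have h2 : Real.Gamma (s+β+(k:ℝ)+1) ≠ 0 := (Real.Gamma_pos_of_pos hpos).ne'
  have h3 : poch' (s+β+(k:ℝ)+1) (S-k) ≠ 0 := (poch'_pos hpos _).ne'
  field_simp

noncomputable def Qpoly (β : ℝ) (S : ℕ) (P : Polynomial ℝ) : Polynomial ℝ :=
  ∑ k ∈ range (S+1), Polynomial.C (P.coeff k) * ascPochhammer ℝ k *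
    (ascPochhammer ℝ (S-k)).comp (Polynomial.X + Polynomial.C (β+k+1))

lemma Qpoly_eval (β : ℝ) (S : ℕ) (P : Polynomial ℝ) (s : ℝ) :
    (Qpoly β S P).eval s =
      ∑ k ∈ range (S+1), P.coeff k * (poch' s k * poch' (s+β+k+1) (S-k)) := by
  rw [Qpoly, Polynomial.eval_finset_sum]
  refine Finset.sum_congr rfl fun k _ => ?_
  rw [Polynomial.eval_mul, Polynomial.eval_mul, Polynomial.eval_C, Polynomial.eval_comp,
    Polynomial.eval_add, Polynomial.eval_X, Polynomial.eval_C]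
  rw [poch', poch', mul_assoc]
  congr 2
  ring_nf

lemma Qpoly_natDegree_le (β : ℝ) (S : ℕ) (P : Polynomial ℝ) :
    (Qpoly β S P).natDegree ≤ S := by
  refine (Polynomial.natDegree_sum_le _ _).trans ?_
  rw [Finset.fold_max_le]
  refine ⟨Nat.zero_le _, fun k hk => ?_⟩
  rw [Finset.mem_range] at hk
  calc (Polynomial.C (P.coeff k) * ascPochhammer ℝ k *
      (ascPochhammer ℝ (S-k)).comp (Polynomial.X + Polynomial.C (β+k+1))).natDegree
      ≤ (Polynomial.C (P.coeff k) * ascPochhammer ℝ k).natDegree +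
        ((ascPochhammer ℝ (S-k)).comp (Polynomial.X + Polynomial.C (β+k+1))).natDegree :=
        Polynomial.natDegree_mul_le
    _ ≤ S := by
        have h1 : (Polynomial.C (P.coeff k) * ascPochhammer ℝ k).natDegree ≤ k :=
          (Polynomial.natDegree_C_mul_le _ _).trans (le_of_eq (ascPochhammer_natDegree (S := ℝ) k))
        have h2 : ((ascPochhammer ℝ (S-k)).comp (Polynomial.X + Polynomial.C (β+k+1))).natDegree
            ≤ S - k := by
          rw [Polynomial.natDegree_comp, ascPochhammer_natDegree (S := ℝ),
            Polynomial.natDegree_X_add_C, mul_one]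
        omega

lemma Qpoly_eval_special (β : ℝ) (S : ℕ) (P : Polynomial ℝ)
    (hmonic : P.Monic) (hdeg : P.natDegree = S) :
    (Qpoly β S P).eval (-β-(S:ℝ)) = (-1)^S * poch' (β+1) S := by
  rw [Qpoly_eval, Finset.sum_range_succ]
  have hzero : ∀ k ∈ range S,
      P.coeff k * (poch' (-β-(S:ℝ)) k * poch' ((-β-(S:ℝ))+β+k+1) (S-k)) = 0 := by
    intro k hk
    rw [Finset.mem_range] at hk
    have hc : ((S - k - 1 : ℕ) : ℝ) = (S:ℝ) - (k:ℝ) - 1 := by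
      have h6 : (S:ℕ) - k - 1 + (k + 1) = S := by omega
      have h7 := congrArg (Nat.cast (R := ℝ)) h6
      push_cast at h7; linarith
    have hp0 : poch' ((-β-(S:ℝ))+β+k+1) (S-k) = 0 := by
      rw [poch'_eq_prod]
      refine Finset.prod_eq_zero (Finset.mem_range.mpr (by omega : S-k-1 < S-k)) ?_
      rw [hc]; ring
    rw [hp0]; ring
  have hc1 : P.coeff S = 1 := by rw [← hdeg]; exact hmonic.coeff_natDegree
  rw [Finset.sum_eq_zero hzero, zero_add, Nat.sub_self, poch'_zero, mul_one, hc1, one_mul,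
    show -β-(S:ℝ) = -(β+(S:ℝ)) by ring, poch'_neg,
    show β+(S:ℝ)-(S:ℝ)+1 = β+1 by ring]

lemma factorization_of_roots (Q : Polynomial ℝ) (m : ℕ) (R : Multiset ℝ)
    (hcard : Multiset.card R = m) (hnodup : R.Nodup)
    (hdeg : Q.natDegree ≤ m) (hroots : ∀ r ∈ R, Q.eval r = 0) :
    ∃ c : ℝ, ∀ y : ℝ, Q.eval y = c * (R.map fun r => (y - r)).prod := by
  by_cases hQ : Q = 0
  · exact ⟨0, fun y => by simp [hQ]⟩
  have hle : R ≤ Q.roots := by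
    rw [Multiset.le_iff_count]
    intro r
    by_cases hr : r ∈ R
    · have h1 : Multiset.count r R ≤ 1 := Multiset.nodup_iff_count_le_one.mp hnodup r
      have h2 : 1 ≤ Multiset.count r Q.roots := by
        rw [Multiset.one_le_count_iff_mem, Polynomial.mem_roots hQ]
        exact hroots r hr
      omega
    · simp [Multiset.count_eq_zero_of_notMem hr]
  have hdvd : (R.map fun r => Polynomial.X - Polynomial.C r).prod ∣ Q :=
    dvd_trans (Multiset.prod_dvd_prod_of_le (Multiset.map_le_map hle))
      Q.prod_multiset_X_sub_C_dvd
  obtain ⟨q, hq⟩ := hdvd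
  set D := (R.map fun r => Polynomial.X - Polynomial.C r).prod with hD
  have hDm : D.Monic := Polynomial.monic_multiset_prod_of_monic _ _
    (fun r _ => Polynomial.monic_X_sub_C r)
  have hDdeg : D.natDegree = m := by
    rw [hD, Polynomial.natDegree_multiset_prod_X_sub_C_eq_card, hcard]
  have hq0 : q ≠ 0 := by rintro rfl; rw [mul_zero] at hq; exact hQ hq
  have hqdeg : q.natDegree = 0 := by
    have := Polynomial.natDegree_mul (hDm.ne_zero) hq0
    rw [← hq, hDdeg] at this
    omega
  obtain ⟨c, hc⟩ := Polynomial.natDegree_eq_zero.mp hqdeg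
  refine ⟨c, fun y => ?_⟩
  rw [hq, ← hc, Polynomial.eval_mul, Polynomial.eval_C, Polynomial.eval_multiset_prod,
    Multiset.map_map, mul_comm]
  congr 1
  congr 1
  ext r
  simp

lemma prod_lin (a y : ℝ) (m : ℕ) :
    ∏ j ∈ range m, (y - (a + 1 + j)) = (-1)^m * poch' (a+1-y) m := by
  have h : (-1:ℝ)^m = ∏ _j ∈ range m, (-1:ℝ) := by rw [Finset.prod_const, Finset.card_range]
  rw [poch'_eq_prod, h, ← Finset.prod_mul_distrib]
  exact Finset.prod_congr rfl fun j _ => by ring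

/-- The Mellin transform of the weighted type II Jacobi–Piñeiro polynomial:
`∫_0^1 P(x)(1−x)^β x^{s−1} dx = (−1)^{|n|} Γ(|n|+β+1)/∏(α_i+β+|n|+1)_{n_i} ·
Γ(s)/Γ(s+β+|n|+1) · ∏ (α_i+1−s)_{n_i}`. -/
theorem jacobiPineiro_typeII_mellin
    (p : ℕ) (hp : 0 < p) (n : Fin p → ℕ) (hn : ∀ i, 0 < n i)
    (S : ℕ) (hS : S = ∑ i, n i)
    (α : Fin p → ℝ) (hα : ∀ i, -1 < α i)
    (hαint : ∀ i j, i ≠ j → ∀ z : ℤ, α i - α j ≠ (z : ℝ))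
    (β : ℝ) (hβ : -1 < β)
    (P : Polynomial ℝ) (hmonic : P.Monic) (hdeg : P.natDegree = S)
    (horth : ∀ i, ∀ j < n i,
      ∫ x in Set.Ioo (0 : ℝ) 1, x ^ j * P.eval x * x ^ α i * (1 - x) ^ β = 0) :
    ∀ s : ℝ, 0 < s →
      ∫ x in Set.Ioo (0 : ℝ) 1, P.eval x * (1 - x) ^ β * x ^ (s - 1) =
        ((-1 : ℝ) ^ S * Real.Gamma (S + β + 1) /
            ∏ i, poch (α i + β + S + 1) (n i)) *
          (Real.Gamma s / Real.Gamma (s + β + S + 1)) *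
          ∏ i, poch (α i + 1 - s) (n i) := by
  have hpoch : poch = poch' := rfl
  intro s hs
  haveI : NeZero p := ⟨hp.ne'⟩
  have hS1 : 1 ≤ S := by
    rw [hS]
    exact (Finset.sum_pos (fun i _ => hn i) ⟨⟨0, hp⟩, Finset.mem_univ _⟩)
  set Q := Qpoly β S P with hQdef
  -- Step 1 : Mellin transform in terms of Q
  have hF : ∀ t : ℝ, 0 < t →
      ∫ x in Set.Ioo (0:ℝ) 1, P.eval x * (1-x) ^ β * x ^ (t-1) =
        Real.Gamma (β+1) * Real.Gamma t / Real.Gamma (t+β+S+1) * Q.eval t := by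
    intro t ht
    rw [poly_mellin_expand β hβ P ht, hdeg, hQdef, Qpoly_eval, Finset.mul_sum]
    refine Finset.sum_congr rfl fun k hk => ?_
    rw [Finset.mem_range] at hk
    rw [term_eq hβ ht (by omega : k ≤ S)]
    ring
  -- Step 2 : roots of Q from orthogonality
  have hQroot : ∀ i : Fin p, ∀ j : ℕ, j < n i → Q.eval (α i + 1 + j) = 0 := by
    intro i j hj
    have ht : (0:ℝ) < α i + 1 + j := by
      have h1 := hα i; have h2 : (0:ℝ) ≤ (j:ℝ) := Nat.cast_nonneg j; linarith
    have horth' : ∫ x in Set.Ioo (0:ℝ) 1, P.eval x * (1-x) ^ β * x ^ ((α i + 1 + j)-1) = 0 := by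
      refine Eq.trans (setIntegral_congr_fun measurableSet_Ioo fun x hx => ?_) (horth i j hj)
      rw [show α i + 1 + (j:ℝ) - 1 = (j:ℝ) + α i by ring, Real.rpow_add hx.1,
        Real.rpow_natCast]
      ring
    have h0 := hF (α i + 1 + j) ht
    rw [horth'] at h0
    have hA : Real.Gamma (β+1) * Real.Gamma (α i + 1 + j) /
        Real.Gamma (α i + 1 + (j:ℝ) + β + S + 1) ≠ 0 := by
      have g1 := Real.Gamma_pos_of_pos (show (0:ℝ) < β + 1 by linarith)
      have g2 := Real.Gamma_pos_of_pos ht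
      have g3 := Real.Gamma_pos_of_pos (show (0:ℝ) < α i + 1 + (j:ℝ) + β + S + 1 by
        have h2 : (0:ℝ) ≤ (S:ℝ) := Nat.cast_nonneg S; linarith)
      positivity
    exact ((mul_eq_zero.mp h0.symm).resolve_left hA)
  -- Step 3 : the multiset of roots
  set T : Finset ((_ : Fin p) × ℕ) := Finset.univ.sigma fun i => Finset.range (n i) with hT
  set R : Multiset ℝ := T.val.map (fun q => α q.1 + 1 + (q.2 : ℝ)) with hR
  have hcard : Multiset.card R = S := by
    rw [hR, Multiset.card_map, ← Finset.card_def, Finset.card_sigma]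
    simp [hS]
  have hnodup : R.Nodup := by
    refine Multiset.Nodup.map_on ?_ T.nodup
    rintro ⟨i1, j1⟩ h1 ⟨i2, j2⟩ h2 heq
    simp only at heq
    by_cases hi : i1 = i2
    · subst hi
      have : (j1:ℝ) = j2 := by linarith
      have : j1 = j2 := Nat.cast_injective this
      subst this; rfl
    · exfalso
      refine hαint i1 i2 hi ((j2:ℤ) - (j1:ℤ)) ?_
      push_cast
      linarith
  have hroots : ∀ r ∈ R, Q.eval r = 0 := by
    intro r hr
    rw [hR, Multiset.mem_map] at hr
    obtain ⟨⟨i, j⟩, hmem, rfl⟩ := hr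
    rw [← Finset.mem_def, hT, Finset.mem_sigma, Finset.mem_range] at hmem
    exact hQroot i j hmem.2
  obtain ⟨c, hcfac⟩ := factorization_of_roots Q S R hcard hnodup (Qpoly_natDegree_le β S P) hroots
  -- Step 4 : evaluating the root product
  have hprod : ∀ y : ℝ, (R.map fun r => (y - r)).prod =
      (-1:ℝ)^S * ∏ i, poch' (α i + 1 - y) (n i) := by
    intro y
    rw [hR, Multiset.map_map]
    have h1 : ((T.val.map ((fun r => y - r) ∘ fun q => α q.1 + 1 + (q.2:ℝ)))).prod =
        ∏ q ∈ T, (y - (α q.1 + 1 + (q.2:ℝ))) := rfl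
    rw [h1, hT, Finset.prod_sigma]
    have h2 : ∀ i : Fin p, ∏ j ∈ range (n i), (y - (α i + 1 + (j:ℝ))) =
        (-1:ℝ)^(n i) * poch' (α i + 1 - y) (n i) := fun i => prod_lin (α i) y (n i)
    rw [Finset.prod_congr rfl (fun i _ => h2 i), Finset.prod_mul_distrib,
      Finset.prod_pow_eq_pow_sum, ← hS]
  -- Step 5 : determine c and conclude
  have hDpos : (0:ℝ) < ∏ i, poch' (α i + β + S + 1) (n i) := by
    refine Finset.prod_pos fun i _ => poch'_pos ?_ _
    have h1 := hα i
    have h2 : (1:ℝ) ≤ (S:ℝ) := by exact_mod_cast hS1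
    linarith
  set D := ∏ i, poch' (α i + β + S + 1) (n i) with hD
  have hspec : Q.eval (-β-(S:ℝ)) = (-1:ℝ)^S * poch' (β+1) S :=
    Qpoly_eval_special β S P hmonic hdeg
  have hspec2 : Q.eval (-β-(S:ℝ)) = c * ((-1:ℝ)^S * D) := by
    rw [hcfac, hprod, hD]
    congr 2
    refine Finset.prod_congr rfl fun i _ => ?_
    congr 1
    ring
  have hne : ((-1:ℝ)^S) ≠ 0 := pow_ne_zero _ (by norm_num)
  have hcD : c * D = poch' (β+1) S := by
    have h := hspec.symm.trans hspec2
    exact mul_left_cancel₀ hne (by linear_combination -h)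
  have hc : c = poch' (β+1) S / D := by
    rw [eq_div_iff hDpos.ne']
    exact hcD
  have hGam : Real.Gamma ((S:ℝ)+β+1) = Real.Gamma (β+1) * poch' (β+1) S := by
    rw [show (S:ℝ)+β+1 = (β+1)+(S:ℝ) by ring]
    exact Gamma_add_nat (by linarith) S
  rw [hF s hs, hcfac s, hprod s, hpoch, hGam, hc]
  rw [← hD]
  have hDne : D ≠ 0 := hDpos.ne'
  have hG2 : Real.Gamma (s+β+(S:ℝ)+1) ≠ 0 := by
    refine (Real.Gamma_pos_of_pos ?_).ne'
    have h2 : (0:ℝ) ≤ (S:ℝ) := Nat.cast_nonneg S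
    linarith
  field_simp
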